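/- arXiv:1902.00491 — 3 statements merged into one kernel-verified Lean document; each statement's English description precedes it below -/
import Mathlib

section
/- For the generalized ReLU f with parameters 0 < a ≤ b, for all x, y ∈ ℝ we have (f(x) - f(y))·(x - y) ≥ (1/b)·(f(x) - f(y))². -/
/-!
Both `f` and `x ↦ b x - f x` are monotone (the latter is `(b - a) · min x 0`), so `f x - f y` and
`b (x - y) - (f x - f y)` have the sign of `x - y`; their product is therefore nonnegative, which
is the claimed inequality multiplied by `b`.
-/

theorem cocoercive_of_monotone_of_monotone_mul_sub {f : ℝ → ℝ} {b : ℝ} (hb : 0 < b)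
    (hf : Monotone f) (hg : Monotone fun x => b * x - f x) (x y : ℝ) :
    (f x - f y) * (x - y) ≥ (1 / b) * (f x - f y) ^ 2 := by
  have h_same_sign : 0 ≤ (f x - f y) * (b * (x - y) - (f x - f y)) := by
    rcases le_total x y with hxy | hyx
    · exact mul_nonneg_of_nonpos_of_nonpos (sub_nonpos.2 (hf hxy)) (by linarith [hg hxy])
    · exact mul_nonneg (sub_nonneg.2 (hf hyx)) (by linarith [hg hyx])
  rw [ge_iff_le, one_div, inv_mul_le_iff₀ hb]
  linear_combination h_same_sign

section GenReLU

variable {a b : ℝ} {f : ℝ → ℝ}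

theorem genReLU_eq_min_add_max (hf : ∀ x, f x = if x ≤ 0 then a * x else b * x) (x : ℝ) :
    f x = a * min x 0 + b * max x 0 := by
  rw [hf x]
  split_ifs with hx
  · simp [min_eq_left hx, max_eq_right hx]
  · have hx : 0 ≤ x := (not_le.1 hx).le
    simp [min_eq_right hx, max_eq_left hx]

theorem genReLU_monotone (ha : 0 ≤ a) (hb : 0 ≤ b)
    (hf : ∀ x, f x = if x ≤ 0 then a * x else b * x) : Monotone f := by
  rw [show f = _ from funext (genReLU_eq_min_add_max hf)]
  exact ((monotone_id.min monotone_const).const_mul ha).add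
    ((monotone_id.max monotone_const).const_mul hb)

theorem genReLU_monotone_mul_sub (hab : a ≤ b)
    (hf : ∀ x, f x = if x ≤ 0 then a * x else b * x) : Monotone fun x => b * x - f x := by
  have h : (fun x => b * x - f x) = fun x => (b - a) * min x 0 := by
    funext x
    rw [genReLU_eq_min_add_max hf]
    linear_combination -b * min_add_max x 0
  rw [h]
  exact (monotone_id.min monotone_const).const_mul (sub_nonneg.2 hab)

end GenReLU

theorem genReLU_cocoercive (a b : ℝ) (ha : 0 < a) (hab : a ≤ b)
    (f : ℝ → ℝ) (hf : ∀ x, f x = if x ≤ 0 then a * x else b * x) :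
    ∀ x y : ℝ, (f x - f y) * (x - y) ≥ (1 / b) * (f x - f y) ^ 2 := by
  have hb : 0 < b := ha.trans_le hab
  exact cocoercive_of_monotone_of_monotone_mul_sub hb (genReLU_monotone ha.le hb.le hf)
    (genReLU_monotone_mul_sub hab hf)
end

section
/- In the idealized GLM with generalized ReLU activation, the empirical error ê(w) = (1/m)∑ᵢ (yᵢ - φ⟨w, xᵢ⟩)² with yᵢ = φ⟨w*, xᵢ⟩ is (ε, 2b³W/a, w*)-SLQC in w for all w in the ball of radius W and all ε > 0: if ê(w) ≥ ε, then for every v with ‖v - w*‖ ≤ εa/(2b³W), the gradient G(w) of ê satisfies ⟨G(w), w - v⟩ ≥ 0. -/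
open RealInnerProductSpace

/-! With `t, s, u` the projections of `w, w*, v` on a sample `x` and `e = φ t - φ s` its residual,
monotonicity and `b`-Lipschitz continuity of `φ` give `e² ≤ b e (t - s)`. As the subgradient
`γ = g t` lies in `[a, b]`, the term `γ e (t - u)` is the sum of `γ e (t - s) ≥ (a / b) e²` and a
cross term `γ e (s - u)` of size at most `b · 2bW · ‖w* - v‖ ≤ εa / b`. Hence
`b γ e (t - u) ≥ a (e² - ε)` for every sample, and averaging over the samples, an empirical
error of at least `ε` makes `⟪G(w), w - v⟫` nonnegative. -/

noncomputable def genReLU (a b t : ℝ) : ℝ := if t ≤ 0 then a * t else b * t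

section genReLU

variable {a b : ℝ}

theorem genReLU_monotone_s11 (ha : 0 ≤ a) (hb : 0 ≤ b) : Monotone (genReLU a b) := by
  intro t s hts
  unfold genReLU
  split_ifs <;> nlinarith

theorem abs_genReLU_sub_le (ha : 0 ≤ a) (hab : a ≤ b) (t s : ℝ) :
    |genReLU a b t - genReLU a b s| ≤ b * |t - s| := by
  have h₁ := le_abs_self (t - s)
  have h₂ := neg_abs_le (t - s)
  rw [abs_le]
  unfold genReLU
  constructor <;> split_ifs <;> nlinarith

end genReLU

section Monotone

variable {f : ℝ → ℝ} {L : ℝ}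

theorem Monotone.sq_sub_le_mul_mul_sub (hf : Monotone f)
    (hL : ∀ t s, |f t - f s| ≤ L * |t - s|) (t s : ℝ) :
    (f t - f s) ^ 2 ≤ L * ((f t - f s) * (t - s)) := by
  have hmono : 0 ≤ (f t - f s) * (t - s) :=
    (hf.monovary monotone_id).sub_mul_sub_nonneg s t
  calc (f t - f s) ^ 2 = |f t - f s| * |f t - f s| := by rw [abs_mul_abs_self, sq]
    _ ≤ |f t - f s| * (L * |t - s|) := mul_le_mul_of_nonneg_left (hL t s) (abs_nonneg _)
    _ = L * ((f t - f s) * (t - s)) := by rw [mul_left_comm, ← abs_mul, abs_of_nonneg hmono]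

theorem Monotone.mul_sq_sub_le_slope_mul {a γ D R : ℝ} (hf : Monotone f)
    (hL : ∀ t s, |f t - f s| ≤ L * |t - s|) (ha : 0 ≤ a) (haγ : a ≤ γ) (hγL : γ ≤ L)
    {t s u : ℝ} (hts : |t - s| ≤ D) (hsu : |s - u| ≤ R) :
    a * (f t - f s) ^ 2 - L ^ 3 * D * R ≤ L * (γ * ((f t - f s) * (t - u))) := by
  set e := f t - f s
  have hL0 : 0 ≤ L := ha.trans (haγ.trans hγL)
  have hmain : a * e ^ 2 ≤ L * (γ * (e * (t - s))) := by
    have hmono : 0 ≤ e * (t - s) := (hf.monovary monotone_id).sub_mul_sub_nonneg s t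
    calc a * e ^ 2 ≤ a * (L * (e * (t - s))) :=
          mul_le_mul_of_nonneg_left (hf.sq_sub_le_mul_mul_sub hL t s) ha
      _ = L * (a * (e * (t - s))) := by ring
      _ ≤ L * (γ * (e * (t - s))) := by gcongr
  have hcross : |γ * (e * (s - u))| ≤ L * ((L * D) * R) := by
    rw [abs_mul, abs_mul]
    have hγ : |γ| ≤ L := abs_le.mpr ⟨by linarith, hγL⟩
    have he : |e| ≤ L * D := (hL t s).trans (mul_le_mul_of_nonneg_left hts hL0)
    have hD : 0 ≤ D := (abs_nonneg _).trans hts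
    gcongr
  have hsplit : e * (t - u) = e * (t - s) + e * (s - u) := by ring
  rw [hsplit, mul_add, mul_add]
  nlinarith [neg_abs_le (γ * (e * (s - u)))]

end Monotone

theorem abs_inner_sub_inner_le {E : Type*} [NormedAddCommGroup E] [InnerProductSpace ℝ E]
    (p q x : E) : |⟪p, x⟫ - ⟪q, x⟫| ≤ ‖p - q‖ * ‖x‖ := by
  rw [← inner_sub_left]
  exact abs_real_inner_le_norm _ _

theorem Monotone.mul_sq_sub_le_slope_mul_inner {E : Type*} [NormedAddCommGroup E]
    [InnerProductSpace ℝ E] {f : ℝ → ℝ} {L a γ D R : ℝ} (hf : Monotone f)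
    (hL : ∀ t s, |f t - f s| ≤ L * |t - s|) (ha : 0 ≤ a) (haγ : a ≤ γ) (hγL : γ ≤ L)
    {w w' v x : E} (hx : ‖x‖ ≤ 1) (hD : ‖w - w'‖ ≤ D) (hR : ‖w' - v‖ ≤ R) :
    a * (f ⟪w, x⟫ - f ⟪w', x⟫) ^ 2 - L ^ 3 * D * R ≤
      L * (γ * ((f ⟪w, x⟫ - f ⟪w', x⟫) * ⟪x, w - v⟫)) := by
  have hinner : ⟪x, w - v⟫ = ⟪w, x⟫ - ⟪v, x⟫ := by
    rw [inner_sub_right, real_inner_comm x w, real_inner_comm x v]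
  have hbound {p q : E} {r : ℝ} (h : ‖p - q‖ ≤ r) : |⟪p, x⟫ - ⟪q, x⟫| ≤ r :=
    (abs_inner_sub_inner_le p q x).trans
      ((mul_le_of_le_one_right (norm_nonneg _) hx).trans h)
  rw [hinner]
  exact hf.mul_sq_sub_le_slope_mul hL ha haγ hγL (hbound hD) (hbound hR)

theorem Finset.sum_nonneg_of_mul_sub_le_mul {ι : Type*} {s : Finset ι} {r c : ι → ℝ}
    {a b ε : ℝ} (ha : 0 ≤ a) (hb : 0 < b) (h : ∀ i ∈ s, a * r i - ε * a ≤ b * c i)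
    (hε : s.card * ε ≤ ∑ i ∈ s, r i) : 0 ≤ ∑ i ∈ s, c i := by
  have hsum := Finset.sum_le_sum h
  rw [Finset.sum_sub_distrib, ← Finset.mul_sum, ← Finset.mul_sum _ _ b, Finset.sum_const,
    nsmul_eq_mul] at hsum
  nlinarith

theorem glm_genReLU_slqc_general (d m : ℕ) (hm : 0 < m) (a b W ε : ℝ)
    (ha : 0 < a) (hab : a ≤ b) (hW : 0 < W)
    (φ g : ℝ → ℝ)
    (hφ : ∀ t, φ t = if t ≤ 0 then a * t else b * t)
    (hg : ∀ t, g t = if t < 0 then a else b)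
    (x : Fin m → EuclideanSpace ℝ (Fin d)) (hx : ∀ i, ‖x i‖ ≤ 1)
    (wstar w : EuclideanSpace ℝ (Fin d)) (hwstar : ‖wstar‖ ≤ W) (hw : ‖w‖ ≤ W)
    (y : Fin m → ℝ) (hy : ∀ i, y i = φ ⟪wstar, x i⟫)
    (herr : (1 / (m : ℝ)) * ∑ i, (y i - φ ⟪w, x i⟫) ^ 2 ≥ ε)
    (v : EuclideanSpace ℝ (Fin d)) (hv : ‖v - wstar‖ ≤ ε * a / (2 * b ^ 3 * W)) :
    ⟪(2 / (m : ℝ)) • ∑ i, (g ⟪w, x i⟫ * (φ ⟪w, x i⟫ - y i)) • x i, w - v⟫ ≥ 0 := by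
  have hb : 0 < b := ha.trans_le hab
  obtain rfl : φ = genReLU a b := funext hφ
  have hR : b ^ 3 * (2 * W) * (ε * a / (2 * b ^ 3 * W)) = ε * a := by field_simp
  have hD : ‖w - wstar‖ ≤ 2 * W := by linarith [norm_sub_le w wstar]
  have hterm (i : Fin m) : a * (y i - genReLU a b ⟪w, x i⟫) ^ 2 - ε * a ≤
      b * (g ⟪w, x i⟫ * ((genReLU a b ⟪w, x i⟫ - y i) * ⟪x i, w - v⟫)) := by
    have hg_mem : a ≤ g ⟪w, x i⟫ ∧ g ⟪w, x i⟫ ≤ b := by rw [hg]; split_ifs <;> simp [hab]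
    rw [sub_sq_comm, hy i, ← hR]
    exact (genReLU_monotone_s11 ha.le hb.le).mul_sq_sub_le_slope_mul_inner
      (abs_genReLU_sub_le ha.le hab) ha.le hg_mem.1 hg_mem.2 (hx i) hD (norm_sub_rev v wstar ▸ hv)
  have hmε : (Finset.univ : Finset (Fin m)).card * ε ≤ ∑ i, (y i - genReLU a b ⟪w, x i⟫) ^ 2 := by
    rwa [Finset.card_univ, Fintype.card_fin, ← le_div_iff₀' (by exact_mod_cast hm), div_eq_inv_mul,
      ← one_div]
  have hsum := Finset.sum_nonneg_of_mul_sub_le_mul ha.le hb (fun i _ => hterm i) hmε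
  simp only [real_inner_smul_left, sum_inner, mul_assoc]
  exact mul_nonneg (by positivity) hsum

theorem glm_genReLU_slqc (d m : ℕ) (hm : 0 < m) (a b W ε : ℝ)
    (ha : 0 < a) (hab : a ≤ b) (hW : 0 < W) (hε : 0 < ε)
    (φ g : ℝ → ℝ)
    (hφ : ∀ t, φ t = if t ≤ 0 then a * t else b * t)
    (hg : ∀ t, g t = if t < 0 then a else b)
    (x : Fin m → EuclideanSpace ℝ (Fin d)) (hx : ∀ i, ‖x i‖ ≤ 1)
    (wstar w : EuclideanSpace ℝ (Fin d)) (hwstar : ‖wstar‖ ≤ W) (hw : ‖w‖ ≤ W)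
    (y : Fin m → ℝ) (hy : ∀ i, y i = φ ⟪wstar, x i⟫)
    (herr : (1 / (m : ℝ)) * ∑ i, (y i - φ ⟪w, x i⟫) ^ 2 ≥ ε)
    (v : EuclideanSpace ℝ (Fin d)) (hv : ‖v - wstar‖ ≤ ε * a / (2 * b ^ 3 * W)) :
    ⟪(2 / (m : ℝ)) • ∑ i, (g ⟪w, x i⟫ * (φ ⟪w, x i⟫ - y i)) • x i, w - v⟫ ≥ 0 :=
  glm_genReLU_slqc_general d m hm a b W ε ha hab hW φ g hφ hg x hx wstar w hwstar hw y hy herr v hv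
end

section
/- For the standard ReLU idealized GLM, if ê(w) restricted to samples with ⟨w, xᵢ⟩ > 0 is at least ε, then for every v with ‖v - w*‖ ≤ ε/(2b²W), the subgradient G satisfies ⟨G(w), w - v⟩ ≥ ε·(2 - ‖w - w*‖/W) ≥ 0, i.e. ê is (ε, 2b²W, w*)-SLQC. -/
/-!
Write `a = ⟪w, x⟫`, `c = ⟪w*, x⟫` and split `⟪x, w - v⟫ = (a - c) + ⟪x, w* - v⟫`. Since the ReLU
is monotone and `b`-Lipschitz, `(φ a - φ c)² ≤ b (φ a - φ c)(a - c)`, so the first part of each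
gradient term dominates the squared residual on the active samples `a > 0`. The second part is
at most `b² ‖w - w*‖ ‖v - w*‖ ≤ ε ‖w - w*‖ / (2W)` in absolute value. Averaging over the samples
gives `⟪G(w), w - v⟫ ≥ 2ε - ε ‖w - w*‖ / W`, which is nonnegative as `‖w - w*‖ ≤ 2W`.
-/

open RealInnerProductSpace Finset

noncomputable def relu (b t : ℝ) : ℝ := if 0 ≤ t then b * t else 0

noncomputable def reluDeriv (b t : ℝ) : ℝ := if 0 ≤ t then b else 0

section Relu

variable {b : ℝ}

lemma relu_sub_relu_mul_sub_nonneg (hb : 0 ≤ b) (a c : ℝ) :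
    0 ≤ (relu b a - relu b c) * (a - c) := by
  unfold relu
  split_ifs <;> nlinarith [mul_nonneg hb (sq_nonneg (a - c))]

lemma abs_relu_sub_relu_le (hb : 0 ≤ b) (a c : ℝ) :
    |relu b a - relu b c| ≤ b * |a - c| := by
  unfold relu
  rcases abs_cases (a - c) with ⟨h, hac⟩ | ⟨h, hac⟩ <;> rw [h, abs_le] <;> split_ifs <;>
    constructor <;> nlinarith

lemma sq_relu_sub_relu_le (hb : 0 ≤ b) (a c : ℝ) :
    (relu b a - relu b c) ^ 2 ≤ b * ((relu b a - relu b c) * (a - c)) := by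
  calc (relu b a - relu b c) ^ 2 = |relu b a - relu b c| * |relu b a - relu b c| := by
        rw [← sq, sq_abs]
    _ ≤ |relu b a - relu b c| * (b * |a - c|) := by gcongr; exact abs_relu_sub_relu_le hb a c
    _ = b * |(relu b a - relu b c) * (a - c)| := by rw [abs_mul]; ring
    _ = b * ((relu b a - relu b c) * (a - c)) := by
        rw [abs_of_nonneg (relu_sub_relu_mul_sub_nonneg hb a c)]

lemma ite_sq_relu_sub_le_reluDeriv_mul (hb : 0 ≤ b) (a c : ℝ) :
    (if 0 < a then (relu b c - relu b a) ^ 2 else 0)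
      ≤ reluDeriv b a * (relu b a - relu b c) * (a - c) := by
  unfold reluDeriv
  have hsq := sq_relu_sub_relu_le hb a c
  have hmono := relu_sub_relu_mul_sub_nonneg hb a c
  split_ifs with hpos hnn hnn
  · rw [← neg_sub, neg_sq, mul_assoc]
    exact hsq
  · exact absurd hpos.le hnn
  · rw [mul_assoc]; exact mul_nonneg hb hmono
  · simp

lemma abs_reluDeriv_mul_relu_sub_le (hb : 0 ≤ b) (a c : ℝ) :
    |reluDeriv b a * (relu b a - relu b c)| ≤ b ^ 2 * |a - c| := by
  have hderiv : |reluDeriv b a| ≤ b := by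
    unfold reluDeriv
    split_ifs <;> simp [abs_of_nonneg hb, hb]
  rw [abs_mul, sq, mul_assoc]
  exact mul_le_mul hderiv (abs_relu_sub_relu_le hb a c) (abs_nonneg _) hb

end Relu

lemma ite_sq_relu_sub_sub_le_reluDeriv_mul_inner {E : Type*} [NormedAddCommGroup E]
    [InnerProductSpace ℝ E] {b : ℝ} (hb : 0 ≤ b) {x : E} (hx : ‖x‖ ≤ 1) (w wstar v : E) :
    (if 0 < ⟪w, x⟫ then (relu b ⟪wstar, x⟫ - relu b ⟪w, x⟫) ^ 2 else 0)
        - b ^ 2 * ‖w - wstar‖ * ‖v - wstar‖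
      ≤ reluDeriv b ⟪w, x⟫ * (relu b ⟪w, x⟫ - relu b ⟪wstar, x⟫) * ⟪x, w - v⟫ := by
  set r := reluDeriv b ⟪w, x⟫ * (relu b ⟪w, x⟫ - relu b ⟪wstar, x⟫)
  have hsplit : ⟪x, w - v⟫ = (⟪w, x⟫ - ⟪wstar, x⟫) + ⟪x, wstar - v⟫ := by
    rw [← inner_sub_left, real_inner_comm (wstar - v) x, ← inner_add_left, sub_add_sub_cancel,
      real_inner_comm]
  have hdiff : |⟪w, x⟫ - ⟪wstar, x⟫| ≤ ‖w - wstar‖ := by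
    rw [← inner_sub_left]
    exact (abs_real_inner_le_norm _ _).trans (mul_le_of_le_one_right (norm_nonneg _) hx)
  have hshift : |⟪x, wstar - v⟫| ≤ ‖v - wstar‖ := by
    rw [norm_sub_rev]
    exact (abs_real_inner_le_norm _ _).trans (mul_le_of_le_one_left (norm_nonneg _) hx)
  have hr : |r * ⟪x, wstar - v⟫| ≤ b ^ 2 * ‖w - wstar‖ * ‖v - wstar‖ := by
    rw [abs_mul]
    gcongr
    exact (abs_reluDeriv_mul_relu_sub_le hb _ _).trans (by gcongr)
  rw [hsplit, mul_add]
  linarith [ite_sq_relu_sub_le_reluDeriv_mul hb ⟪w, x⟫ ⟪wstar, x⟫, neg_abs_le (r * ⟪x, wstar - v⟫)]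

theorem glm_reLU_slqc (d m : ℕ) (hm : 0 < m) (b W ε : ℝ)
    (hb : 0 < b) (hW : 0 < W) (hε : 0 < ε)
    (φ g : ℝ → ℝ)
    (hφ : ∀ t, φ t = if 0 ≤ t then b * t else 0)
    (hg : ∀ t, g t = if 0 ≤ t then b else 0)
    (x : Fin m → EuclideanSpace ℝ (Fin d)) (hx : ∀ i, ‖x i‖ ≤ 1)
    (wstar w : EuclideanSpace ℝ (Fin d)) (hwstar : ‖wstar‖ ≤ W) (hw : ‖w‖ ≤ W)
    (y : Fin m → ℝ) (hy : ∀ i, y i = φ ⟪wstar, x i⟫)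
    (herr : (1 / (m : ℝ)) *
      ∑ i, (if 0 < ⟪w, x i⟫ then (y i - φ ⟪w, x i⟫) ^ 2 else 0) ≥ ε)
    (v : EuclideanSpace ℝ (Fin d)) (hv : ‖v - wstar‖ ≤ ε / (2 * b ^ 2 * W)) :
    ⟪(2 / (m : ℝ)) • ∑ i, (g ⟪w, x i⟫ * (φ ⟪w, x i⟫ - y i)) • x i, w - v⟫
      ≥ ε * (2 - ‖w - wstar‖ / W) ∧
    ε * (2 - ‖w - wstar‖ / W) ≥ 0 := by
  obtain rfl : φ = relu b := funext hφ
  obtain rfl : g = reluDeriv b := funext hg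
  obtain rfl : y = fun i => relu b ⟪wstar, x i⟫ := funext hy
  have hm' : (0 : ℝ) < m := Nat.cast_pos.mpr hm
  set D := ‖w - wstar‖
  have hD : D ≤ 2 * W := (norm_sub_le w wstar).trans (by linarith)
  have hshift : b ^ 2 * D * ‖v - wstar‖ ≤ ε * D / (2 * W) :=
    calc b ^ 2 * D * ‖v - wstar‖ ≤ b ^ 2 * D * (ε / (2 * b ^ 2 * W)) := by gcongr
      _ = ε * D / (2 * W) := by field_simp
  have hactive : m * ε ≤ ∑ i, (if 0 < ⟪w, x i⟫ then
      (relu b ⟪wstar, x i⟫ - relu b ⟪w, x i⟫) ^ 2 else 0) := by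
    rwa [ge_iff_le, one_div, inv_mul_eq_div, le_div_iff₀ hm', mul_comm] at herr
  have hsum : m * ε - m * (ε * D / (2 * W)) ≤ ∑ i, reluDeriv b ⟪w, x i⟫ *
      (relu b ⟪w, x i⟫ - relu b ⟪wstar, x i⟫) * ⟪x i, w - v⟫ :=
    calc m * ε - m * (ε * D / (2 * W))
        ≤ ∑ i, ((if 0 < ⟪w, x i⟫ then (relu b ⟪wstar, x i⟫ - relu b ⟪w, x i⟫) ^ 2 else 0)
            - ε * D / (2 * W)) := by
          rw [sum_sub_distrib, sum_const, card_fin, nsmul_eq_mul]; linarith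
      _ ≤ _ := sum_le_sum fun i _ => (sub_le_sub_left hshift _).trans
          (ite_sq_relu_sub_sub_le_reluDeriv_mul_inner hb.le (hx i) w wstar v)
  simp only [real_inner_smul_left, sum_inner]
  constructor
  · calc ε * (2 - D / W) = 2 / m * (m * ε - m * (ε * D / (2 * W))) := by field_simp
      _ ≤ _ := by gcongr
  · have : D / W ≤ 2 := (div_le_iff₀ hW).2 (by linarith)
    exact mul_nonneg hε.le (by linarith)
end
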